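/- arXiv:1507.07395 — 3 statements merged into one kernel-verified Lean document; each statement's English description precedes it below -/
import Mathlib

section
/- Let X = (X_1, …, X_k) be a tuple of n×n complex matrices, viewed as a matrix in M_{n×nk}(ℂ). Then the product of determinants satisfies |det(X_1) ⋯ det(X_k)| ≤ ‖X‖^{nk} / (nk)^{nk/2}, where ‖X‖² = Σᵢ ‖Xᵢ‖² is the total Frobenius norm. -/
/-!
Writing `λ_{ij} ≥ 0` for the eigenvalues of `X_iᴴ X_i`, we have `|det X_i|² = ∏_j λ_{ij}` and
`‖X‖² = ∑_{i,j} λ_{ij}`, so the bound is AM-GM applied to the `nk` numbers `λ_{ij}`, followed by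
a square root.
-/

open Finset Matrix

theorem Real.prod_le_arith_mean_pow_card {ι : Type*} (s : Finset ι) {z : ι → ℝ}
    (hz : ∀ i ∈ s, 0 ≤ z i) : ∏ i ∈ s, z i ≤ ((∑ i ∈ s, z i) / #s) ^ #s := by
  rcases s.eq_empty_or_nonempty with rfl | hs
  · simp
  have hcard : (0 : ℝ) < #s := by exact_mod_cast hs.card_pos
  have amgm : ∏ i ∈ s, z i ^ (#s : ℝ)⁻¹ ≤ ∑ i ∈ s, (#s : ℝ)⁻¹ * z i :=
    Real.geom_mean_le_arith_mean_weighted s _ z (fun _ _ => by positivity)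
      (by simp [hcard.ne']) hz
  rw [Real.finsetProd_rpow s z hz, ← Finset.mul_sum, inv_mul_eq_div] at amgm
  calc ∏ i ∈ s, z i = ((∏ i ∈ s, z i) ^ (#s : ℝ)⁻¹) ^ #s := by
        rw [← Real.rpow_natCast, ← Real.rpow_mul (prod_nonneg hz), inv_mul_cancel₀ hcard.ne',
          Real.rpow_one]
    _ ≤ _ := pow_le_pow_left₀ (Real.rpow_nonneg (prod_nonneg hz) _) amgm _

namespace Matrix

variable {𝕜 m n : Type*} [RCLike 𝕜] [Fintype m] [Fintype n] [DecidableEq n]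

theorem norm_det_sq_eq_prod_eigenvalues_conjTranspose_mul_self (A : Matrix n n 𝕜) :
    ‖A.det‖ ^ 2 = ∏ j, (isHermitian_conjTranspose_mul_self A).eigenvalues j := by
  have h := (isHermitian_conjTranspose_mul_self A).det_eq_prod_eigenvalues
  rw [det_mul, det_conjTranspose, RCLike.star_def, RCLike.conj_mul, ← RCLike.ofReal_prod] at h
  exact_mod_cast h

theorem sum_norm_sq_eq_sum_eigenvalues_conjTranspose_mul_self (A : Matrix m n 𝕜) :
    ∑ a, ∑ b, ‖A a b‖ ^ 2 = ∑ j, (isHermitian_conjTranspose_mul_self A).eigenvalues j := by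
  have h := (isHermitian_conjTranspose_mul_self A).trace_eq_sum_eigenvalues
  rw [← RCLike.ofReal_sum] at h
  have htr : (Aᴴ * A).trace = ((∑ a, ∑ b, ‖A a b‖ ^ 2 : ℝ) : 𝕜) := by
    rw [Finset.sum_comm]
    simp [Matrix.trace, Matrix.mul_apply, RCLike.conj_mul]
  exact_mod_cast htr.symm.trans h

theorem norm_prod_det_sq_le {ι : Type*} [Fintype ι] (X : ι → Matrix n n 𝕜) :
    ‖∏ i, (X i).det‖ ^ 2 ≤
      ((∑ i, ∑ a, ∑ b, ‖X i a b‖ ^ 2) / (Fintype.card n * Fintype.card ι)) ^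
        (Fintype.card n * Fintype.card ι) := by
  let eig (p : ι × n) : ℝ := (isHermitian_conjTranspose_mul_self (X p.1)).eigenvalues p.2
  have hprod : ‖∏ i, (X i).det‖ ^ 2 = ∏ p, eig p := by
    simp only [norm_prod, ← prod_pow, norm_det_sq_eq_prod_eigenvalues_conjTranspose_mul_self,
      Fintype.prod_prod_type, eig]
  have hsum : ∑ i, ∑ a, ∑ b, ‖X i a b‖ ^ 2 = ∑ p, eig p := by
    simp only [sum_norm_sq_eq_sum_eigenvalues_conjTranspose_mul_self, Fintype.sum_prod_type, eig]
  rw [hprod, hsum]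
  have amgm := Real.prod_le_arith_mean_pow_card (univ : Finset (ι × n)) fun p _ =>
    eigenvalues_conjTranspose_mul_self_nonneg (X p.1) p.2
  rwa [card_univ, Fintype.card_prod, Nat.mul_comm, Nat.cast_mul] at amgm

end Matrix

/-- For a multiblock matrix `X = (X_1, …, X_k)` of `n × n` complex blocks, the product of the
block determinants satisfies `|det X_1 ⋯ det X_k| ≤ ‖X‖^{nk} / (nk)^{nk/2}`, where
`‖X‖² = ∑ i ‖X i‖²` is the total Frobenius norm. -/
theorem abs_prod_det_le_frobenius_pow_div (n k : ℕ)
    (X : Fin k → Matrix (Fin n) (Fin n) ℂ) :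
    ‖∏ i, (X i).det‖ ≤
      (Real.sqrt (∑ i, ∑ a, ∑ b, ‖X i a b‖ ^ 2)) ^ (n * k) /
        ((n * k : ℕ) : ℝ) ^ (((n * k : ℕ) : ℝ) / 2) := by
  set S := ∑ i, ∑ a, ∑ b, ‖X i a b‖ ^ 2
  set N := n * k
  have hS : 0 ≤ S := by positivity
  have hN : (0 : ℝ) ≤ N := N.cast_nonneg
  have hsq : ‖∏ i, (X i).det‖ ^ 2 ≤ (S / N) ^ N := by
    simpa [S, N] using norm_prod_det_sq_le X
  have hrhs : (√S ^ N / (N : ℝ) ^ ((N : ℝ) / 2)) ^ 2 = (S / N) ^ N := by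
    rw [div_pow, div_pow, ← pow_mul, mul_comm, pow_mul, Real.sq_sqrt hS, ← Real.rpow_natCast _ 2,
      ← Real.rpow_mul hN, Nat.cast_ofNat, div_mul_cancel₀ _ two_ne_zero, Real.rpow_natCast]
  rw [← hrhs] at hsq
  exact (pow_le_pow_iff_left₀ (norm_nonneg _) (by positivity) two_ne_zero).mp hsq
end

section
/- Let L be a full-rank lattice in ℝ^d (i.e., the ℤ-span of a basis of ℝ^d) and let S ⊆ ℝ^d be a bounded measurable set. Then there exists a vector x ∈ ℝ^d such that the number of points of the translated lattice L + x lying in S is at least vol(S)/covol(L), where covol(L) is the volume of a fundamental parallelotope of L. -/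
open MeasureTheory
open scoped ENNReal

/-!
Unfolding `vol S` over a fundamental domain `F` of the lattice `L` gives
`vol S = ∫_F #{l ∈ L | l + x ∈ S} dx`, so at some `x ∈ F` the count is at least its mean
`vol S / vol F = vol S / covol L`. Boundedness of `S` and discreteness of `L` keep the count
finite, which matters because `Set.ncard` is `0` on infinite sets.
-/

theorem tsum_indicator_one_vadd {G α : Type*} [VAdd G α] (t : Set α) (x : α) :
    ∑' g : G, t.indicator (1 : α → ℝ≥0∞) (g +ᵥ x) = {g : G | g +ᵥ x ∈ t}.encard := by
  rw [← ENNReal.tsum_set_one, tsum_subtype _ fun _ => (1 : ℝ≥0∞)]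
  rfl

namespace MeasureTheory.IsAddFundamentalDomain

variable {G α : Type*} [AddGroup G] [Countable G] [AddAction G α] [MeasurableSpace α]
  [MeasurableConstVAdd G α] {μ : Measure α} [VAddInvariantMeasure G α μ] {s t : Set α}

theorem setLIntegral_tsum_indicator_vadd (h : IsAddFundamentalDomain G s μ)
    (ht : MeasurableSet t) :
    ∫⁻ x in s, ∑' g : G, t.indicator 1 (g +ᵥ x) ∂μ = μ t := by
  rw [lintegral_tsum (f := fun g x => t.indicator 1 (g +ᵥ x)) fun g =>
    ((measurable_one.indicator ht).comp (measurable_const_vadd g)).aemeasurable,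
    ← h.lintegral_eq_tsum'', lintegral_indicator_one ht]

theorem exists_measure_div_le_encard (h : IsAddFundamentalDomain G s μ) (hs : μ s ≠ 0)
    (ht : MeasurableSet t) (ht_top : μ t ≠ ⊤) :
    ∃ x, μ t / μ s ≤ {g : G | g +ᵥ x ∈ t}.encard := by
  have hint := h.setLIntegral_tsum_indicator_vadd ht
  obtain ⟨x, -, hx⟩ := exists_setLAverage_le hs h.nullMeasurableSet (hint ▸ ht_top)
  rw [setLAverage_eq, hint, tsum_indicator_one_vadd] at hx
  exact ⟨x, hx⟩

end MeasureTheory.IsAddFundamentalDomain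

namespace ZSpan

variable {E ι : Type*} [NormedAddCommGroup E] [NormedSpace ℝ E] (b : Module.Basis ι ℝ E)

theorem setOf_mem_and_mem_span_add_finite [ProperSpace E] [Finite ι] {S : Set E}
    (hS : Bornology.IsBounded S) (x : E) :
    {p | p ∈ S ∧ ∃ l ∈ Submodule.span ℤ (Set.range b), p = l + x}.Finite := by
  refine ((setFinite_inter b (hS.vadd (-x))).image (· + x)).subset ?_
  rintro _ ⟨hp, l, hl, rfl⟩
  exact ⟨l, ⟨⟨l + x, hp, by simp⟩, hl⟩, rfl⟩

theorem encard_setOf_mem_and_mem_span_add (S : Set E) (x : E) :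
    {p | p ∈ S ∧ ∃ l ∈ Submodule.span ℤ (Set.range b), p = l + x}.encard =
      {g : (Submodule.span ℤ (Set.range b)).toAddSubgroup | g +ᵥ x ∈ S}.encard := by
  rw [← Function.Injective.encard_image (fun g h e => Subtype.ext (add_right_cancel e))]
  congr 1
  ext p
  constructor
  · rintro ⟨hp, l, hl, rfl⟩
    exact ⟨⟨l, hl⟩, hp, rfl⟩
  · rintro ⟨g, hg, rfl⟩
    exact ⟨hg, g, g.2, rfl⟩

end ZSpan

/-- **Shifting lemma.** Let `L` be a full-rank lattice in `ℝ^d` (the ℤ-span of a basis `b` of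
`ℝ^d`) and let `S ⊆ ℝ^d` be a bounded measurable set. Then there exists a translate `x` such
that the number of points of `L + x` lying in `S` is at least `vol(S) / covol(L)`, where
`covol(L)` is the absolute value of the determinant of a matrix whose rows are the basis
vectors of `L`. -/
theorem exists_translate_card_ge (d : ℕ) (b : Module.Basis (Fin d) ℝ (Fin d → ℝ))
    (S : Set (Fin d → ℝ)) (hbdd : Bornology.IsBounded S) (hmeas : MeasurableSet S) :
    ∃ x : Fin d → ℝ,
      (volume S).toReal / |(Matrix.of fun i j => b i j).det| ≤
        (Set.ncard {p : Fin d → ℝ | p ∈ S ∧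
          ∃ l ∈ Submodule.span ℤ (Set.range b), p = l + x} : ℝ) := by
  have : Countable (Submodule.span ℤ (Set.range b)).toAddSubgroup :=
    inferInstanceAs (Countable (Submodule.span ℤ (Set.range b)))
  obtain ⟨x, hx⟩ := (ZSpan.isAddFundamentalDomain' b volume).exists_measure_div_le_encard
    (ZSpan.measure_fundamentalDomain_ne_zero b) hmeas hbdd.measure_lt_top.ne
  refine ⟨x, ?_⟩
  rw [← ZSpan.encard_setOf_mem_and_mem_span_add, ZSpan.volume_fundamentalDomain,
    ← (ZSpan.setOf_mem_and_mem_span_add_finite b hbdd x).cast_ncard_eq] at hx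
  have := ENNReal.toReal_mono (by simp) hx
  rwa [ENNReal.toReal_div, ENNReal.toReal_ofReal (abs_nonneg _)] at this
end

section
/- Let L ⊂ M_{n×nk}(ℂ) be a lattice of full rank 2n²k with det_min(L) > 0 (nonvanishing determinant). Then the reduced Hermite invariant of L with respect to the group G = {H = (H_1,…,H_k), each H_i ∈ GL_n(ℂ), with ∏ᵢ det(H_i) = 1} satisfies rh_G(L) = nk · δ(L)^{2/(nk)}, where δ(L) is the normalized minimum determinant. Moreover, if some nonzero X ∈ L has ∏ᵢ det(X_i) = 0, then rh_G(L) = 0 = nk · δ(L)^{2/(nk)}. -/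
open Matrix

/-- The absolute value of the product of the block determinants of a multiblock matrix. -/
noncomputable def pdetAbs {n k : ℕ} (X : Fin k → Matrix (Fin n) (Fin n) ℂ) : ℝ :=
  ‖∏ i, (X i).det‖

/-- Squared Frobenius norm of a multiblock matrix. -/
noncomputable def frobSq {n k : ℕ} (X : Fin k → Matrix (Fin n) (Fin n) ℂ) : ℝ :=
  ∑ i, ∑ a, ∑ b, ‖X i a b‖ ^ 2

/-- The real inner product `⟨X, Y⟩ = Re (Tr (X Yᴴ))` on multiblock matrices. -/
noncomputable def mbInner {n k : ℕ} (X Y : Fin k → Matrix (Fin n) (Fin n) ℂ) : ℝ :=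
  (∑ i, ((X i) * (Y i)ᴴ).trace).re

/-- The volume of the fundamental parallelotope of the lattice spanned by `B`. -/
noncomputable def latticeVol {n k m : ℕ} (B : Fin m → (Fin k → Matrix (Fin n) (Fin n) ℂ)) : ℝ :=
  Real.sqrt |(Matrix.of fun i j => mbInner (B i) (B j)).det|

/-- The minimum determinant of the lattice spanned by `B`. -/
noncomputable def detMin {n k m : ℕ} (B : Fin m → (Fin k → Matrix (Fin n) (Fin n) ℂ)) : ℝ :=
  sInf {r : ℝ | ∃ X ∈ Submodule.span ℤ (Set.range B), X ≠ 0 ∧ r = pdetAbs X}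

/-- The normalized minimum determinant of a full-rank lattice (rank `2n²k`):
`δ(L) = det_min(L) / Vol(L)^{1/(2n)}`. -/
noncomputable def normMinDet {n k : ℕ}
    (B : Fin (2 * n ^ 2 * k) → (Fin k → Matrix (Fin n) (Fin n) ℂ)) : ℝ :=
  detMin B / (latticeVol B) ^ ((1 : ℝ) / (2 * n))

/-- The reduced Hermite invariant of the lattice spanned by `B` with respect to the group
`G = {H = (H_1,…,H_k) : H_i ∈ GL_n(ℂ), ∏ det (H_i) = 1}`: the infimum over `H ∈ G` of the
Hermite invariant of the faded lattice `HL` (whose volume equals that of `L` since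
`pdet H = 1`). -/
noncomputable def reducedHermite {n k : ℕ}
    (B : Fin (2 * n ^ 2 * k) → (Fin k → Matrix (Fin n) (Fin n) ℂ)) : ℝ :=
  sInf {r : ℝ | ∃ H : Fin k → Matrix (Fin n) (Fin n) ℂ,
    (∀ i, IsUnit (H i)) ∧ (∏ i, (H i).det) = 1 ∧
    r = sInf {y : ℝ | ∃ X ∈ Submodule.span ℤ (Set.range B), X ≠ 0 ∧
      y = frobSq (fun i => H i * X i) / (latticeVol B) ^ ((1 : ℝ) / (n ^ 2 * k))}}

/-!
For a fixed multiblock matrix `X`, the infimum of `‖H X‖²` over `H ∈ G` is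
`nk · |∏ det Xᵢ|^{2/(nk)}`. AM–GM on the `nk` eigenvalues of the `Xᵢ Xᵢᴴ` gives the lower bound,
because `G` preserves `∏ det Xᵢ`. If `∏ det Xᵢ ≠ 0` the bound is attained at `Hᵢ = c Xᵢ⁻¹`
with `c^{nk} = ∏ det Xᵢ`. If some `Xᵢ` is singular, some `H ∈ G` acts on `X` as any scalar
`s ≠ 0`, so the infimum is `0`. Exchanging the infima over `H` and over the nonzero lattice
vectors `X` turns `rh_G(L)` into `nk · det_min(L)^{2/(nk)} / Vol(L)^{1/(n²k)} = nk · δ(L)^{2/(nk)}`.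
-/

open scoped ComplexOrder

namespace Matrix

variable {n : Type*} [Fintype n] [DecidableEq n]

theorem sum_eigenvalues_mul_conjTranspose_self (M : Matrix n n ℂ) :
    ∑ a, (isHermitian_mul_conjTranspose_self M).eigenvalues a = ∑ a, ∑ b, ‖M a b‖ ^ 2 := by
  have h := (isHermitian_mul_conjTranspose_self M).trace_eq_sum_eigenvalues
  simp only [trace, diag, mul_apply, conjTranspose_apply, Complex.star_def, Complex.mul_conj,
    Complex.normSq_eq_norm_sq] at h
  exact Complex.ofReal_injective (by push_cast at h ⊢; exact h.symm)

theorem prod_eigenvalues_mul_conjTranspose_self (M : Matrix n n ℂ) :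
    ∏ a, (isHermitian_mul_conjTranspose_self M).eigenvalues a = ‖M.det‖ ^ 2 := by
  have h := (isHermitian_mul_conjTranspose_self M).det_eq_prod_eigenvalues
  rw [det_mul, det_conjTranspose, Complex.star_def, Complex.mul_conj,
    Complex.normSq_eq_norm_sq] at h
  exact Complex.ofReal_injective (by push_cast at h ⊢; exact h.symm)

/-- `A = s • (1 + t • (star u) uᵀ)` with `u` in the left kernel of `M`; `t` tunes the
determinant. -/
theorem exists_det_eq_mul_eq_smul_of_det_eq_zero {M : Matrix n n ℂ} (hM : M.det = 0) {s : ℂ} (hs : s ≠ 0) (d : ℂ) :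
    ∃ A : Matrix n n ℂ, A.det = d ∧ A * M = s • M := by
  obtain ⟨u, hu, huM⟩ := exists_vecMul_eq_zero_iff.mpr hM
  have hw : u ⬝ᵥ star u ≠ 0 := by
    rw [dotProduct_comm]; exact mt dotProduct_star_self_eq_zero.mp hu
  set t := (d / s ^ Fintype.card n - 1) / (u ⬝ᵥ star u)
  refine ⟨s • (1 + replicateCol Unit (t • star u) * replicateRow Unit u), ?_, ?_⟩
  · rw [det_smul, det_one_add_replicateCol_mul_replicateRow, dotProduct_smul, smul_eq_mul,
      div_mul_cancel₀ _ hw, add_sub_cancel, mul_div_cancel₀ _ (pow_ne_zero _ hs)]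
  · have hrow : replicateRow Unit u * M = 0 := by
      ext _ b
      simpa [mul_apply, vecMul, dotProduct] using congrFun huM b
    rw [smul_mul, add_mul, one_mul, Matrix.mul_assoc, hrow, Matrix.mul_zero, add_zero]

end Matrix

theorem pdetAbs_nonneg {n k : ℕ} (X : Fin k → Matrix (Fin n) (Fin n) ℂ) : 0 ≤ pdetAbs X :=
  norm_nonneg _

theorem mul_rpow_pdetAbs_le_frobSq {n k : ℕ} (hn : 0 < n) (hk : 0 < k)
    (X : Fin k → Matrix (Fin n) (Fin n) ℂ) :
    n * k * pdetAbs X ^ ((2 : ℝ) / (n * k)) ≤ frobSq X := by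
  set ev : Fin k × Fin n → ℝ := fun p =>
    (isHermitian_mul_conjTranspose_self (X p.1)).eigenvalues p.2
  have hev : ∀ p, 0 ≤ ev p := fun p =>
    (posSemidef_self_mul_conjTranspose (X p.1)).eigenvalues_nonneg p.2
  have hprod : ∏ p, ev p = pdetAbs X ^ 2 := by
    rw [Fintype.prod_prod_type]
    simp only [ev]
    rw [Finset.prod_congr rfl fun i _ => prod_eigenvalues_mul_conjTranspose_self (X i), pdetAbs,
      norm_prod, Finset.prod_pow]
  have hsum : ∑ p, ev p = frobSq X := by
    rw [Fintype.sum_prod_type]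
    exact Finset.sum_congr rfl fun i _ => sum_eigenvalues_mul_conjTranspose_self (X i)
  have amgm := Real.geom_mean_le_arith_mean Finset.univ (fun _ => 1) ev (by simp)
    (by simp; positivity) (fun p _ => hev p)
  simp only [Real.rpow_one, one_mul, Finset.sum_const, Finset.card_univ, Fintype.card_prod,
    Fintype.card_fin, nsmul_eq_mul, mul_one, hprod, hsum] at amgm
  rw [← Real.rpow_natCast, ← Real.rpow_mul (pdetAbs_nonneg X), le_div_iff₀ (by positivity)]
    at amgm
  push_cast at amgm
  rw [div_eq_mul_inv, mul_comm (n : ℝ) k]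
  linarith

theorem pdetAbs_mul {n k : ℕ} (H X : Fin k → Matrix (Fin n) (Fin n) ℂ) :
    pdetAbs (H * X) = pdetAbs H * pdetAbs X := by
  simp only [pdetAbs, Pi.mul_apply, det_mul, Finset.prod_mul_distrib, norm_mul]

theorem frobSq_nonneg {n k : ℕ} (X : Fin k → Matrix (Fin n) (Fin n) ℂ) : 0 ≤ frobSq X := by
  unfold frobSq; positivity

theorem frobSq_smul {n k : ℕ} (z : ℂ) (X : Fin k → Matrix (Fin n) (Fin n) ℂ) :
    frobSq (z • X) = ‖z‖ ^ 2 * frobSq X := by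
  simp only [frobSq, Pi.smul_apply, Matrix.smul_apply, smul_eq_mul, norm_mul, mul_pow,
    Finset.mul_sum]

theorem frobSq_one {n k : ℕ} : frobSq (1 : Fin k → Matrix (Fin n) (Fin n) ℂ) = n * k := by
  simp [frobSq, one_apply, apply_ite, mul_comm]

/-- The group `G`; it acts on multiblock matrices by the blockwise product `H * X` of `Pi`. -/
def prodDetOne (n k : ℕ) : Set (Fin k → Matrix (Fin n) (Fin n) ℂ) :=
  {H | (∀ i, IsUnit (H i)) ∧ ∏ i, (H i).det = 1}

theorem mem_prodDetOne_of_prod_det_eq_one {n k : ℕ} {H : Fin k → Matrix (Fin n) (Fin n) ℂ}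
    (h : ∏ i, (H i).det = 1) : H ∈ prodDetOne n k := by
  refine ⟨fun i => (isUnit_iff_isUnit_det _).mpr (isUnit_iff_ne_zero.mpr ?_), h⟩
  exact Finset.prod_ne_zero_iff.mp (h ▸ one_ne_zero) i (Finset.mem_univ i)

theorem pdetAbs_eq_one_of_mem_prodDetOne {n k : ℕ} {H : Fin k → Matrix (Fin n) (Fin n) ℂ}
    (hH : H ∈ prodDetOne n k) : pdetAbs H = 1 := by
  rw [pdetAbs, hH.2, norm_one]

theorem exists_mem_prodDetOne_mul_eq_smul {n k : ℕ} {X : Fin k → Matrix (Fin n) (Fin n) ℂ}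
    (hX : pdetAbs X = 0) {s : ℂ} (hs : s ≠ 0) : ∃ H ∈ prodDetOne n k, H * X = s • X := by
  obtain ⟨i₀, -, hi₀⟩ := Finset.prod_eq_zero_iff.mp (norm_eq_zero.mp hX)
  set P := ∏ j ∈ Finset.univ \ {i₀}, (s • 1 : Matrix (Fin n) (Fin n) ℂ).det
  obtain ⟨A, hAdet, hAX⟩ := exists_det_eq_mul_eq_smul_of_det_eq_zero hi₀ hs P⁻¹
  have hP : P ≠ 0 := Finset.prod_ne_zero_iff.mpr fun j _ => by simp [hs]
  set H : Fin k → Matrix (Fin n) (Fin n) ℂ := Function.update (fun _ => s • 1) i₀ A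
  refine ⟨H, mem_prodDetOne_of_prod_det_eq_one ?_, funext fun j => ?_⟩
  · have hrest : ∏ j ∈ Finset.univ \ {i₀}, (H j).det = P :=
      Finset.prod_congr rfl fun j hj => by simp only [H, Function.update_of_ne (by simpa using hj)]
    rw [Finset.prod_eq_mul_prod_sdiff_singleton_of_mem (Finset.mem_univ i₀), hrest,
      show H i₀ = A from Function.update_self .., hAdet, inv_mul_cancel₀ hP]
  · rcases eq_or_ne j i₀ with rfl | hj
    · simpa [H] using hAX
    · simp [H, Function.update_of_ne hj]

theorem exists_mem_prodDetOne_frobSq_mul_eq {n k : ℕ} (hn : 0 < n) (hk : 0 < k)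
    {X : Fin k → Matrix (Fin n) (Fin n) ℂ} (hX : pdetAbs X ≠ 0) :
    ∃ H ∈ prodDetOne n k, frobSq (H * X) = n * k * pdetAbs X ^ ((2 : ℝ) / (n * k)) := by
  have hprod : ∏ i, (X i).det ≠ 0 := norm_ne_zero_iff.mp hX
  have hdet : ∀ i, IsUnit (X i).det := fun i =>
    isUnit_iff_ne_zero.mpr (Finset.prod_ne_zero_iff.mp hprod i (Finset.mem_univ i))
  obtain ⟨c, hc⟩ := IsAlgClosed.exists_pow_nat_eq (∏ i, (X i).det) (Nat.mul_pos hn hk)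
  refine ⟨c • X⁻¹, mem_prodDetOne_of_prod_det_eq_one ?_, ?_⟩
  · simp only [Pi.smul_apply, Pi.inv_apply, det_smul, det_nonsing_inv, Fintype.card_fin,
      Ring.inverse_eq_inv', Finset.prod_mul_distrib, Finset.prod_pow, Finset.prod_inv_distrib,
      Finset.prod_const, Finset.card_univ, ← pow_mul]
    rw [mul_comm k n, hc, mul_inv_cancel₀ hprod]
  · have hHX : c • X⁻¹ * X = c • 1 := funext fun i => by
      simp [nonsing_inv_mul _ (hdet i)]
    have hpdet : pdetAbs X = ‖c‖ ^ (n * k) := by rw [pdetAbs, ← hc, norm_pow]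
    rw [hHX, frobSq_smul, frobSq_one, hpdet, ← Real.rpow_natCast ‖c‖ (n * k),
      ← Real.rpow_mul (norm_nonneg c)]
    push_cast
    rw [mul_div_cancel₀ _ (by positivity), Real.rpow_two]
    ring

open Filter Topology in
theorem isGLB_frobSq_mul {n k : ℕ} (hn : 0 < n) (hk : 0 < k)
    (X : Fin k → Matrix (Fin n) (Fin n) ℂ) :
    IsGLB ((fun H => frobSq (H * X)) '' prodDetOne n k)
      (n * k * pdetAbs X ^ ((2 : ℝ) / (n * k))) := by
  refine ⟨?_, fun b hb => ?_⟩
  · rintro _ ⟨H, hH, rfl⟩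
    simpa [pdetAbs_mul, pdetAbs_eq_one_of_mem_prodDetOne hH] using
      mul_rpow_pdetAbs_le_frobSq hn hk (H * X)
  rcases eq_or_ne (pdetAbs X) 0 with hX | hX
  · have hlim : Tendsto (fun s : ℝ => s ^ 2 * frobSq X) (𝓝[>] 0) (𝓝 0) := by
      have hcont : Continuous fun s : ℝ => s ^ 2 * frobSq X := by fun_prop
      simpa using (hcont.tendsto 0).mono_left nhdsWithin_le_nhds
    rw [hX, Real.zero_rpow (by positivity), mul_zero]
    refine ge_of_tendsto hlim (eventually_nhdsWithin_of_forall fun s hs => ?_)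
    obtain ⟨H, hH, hHX⟩ :=
      exists_mem_prodDetOne_mul_eq_smul hX (Complex.ofReal_ne_zero.mpr (ne_of_gt hs))
    exact hb ⟨H, hH, by simp only [hHX, frobSq_smul, Complex.norm_real, Real.norm_eq_abs, sq_abs]⟩
  · obtain ⟨H, hH, hHX⟩ := exists_mem_prodDetOne_frobSq_mul_eq hn hk hX
    exact hb ⟨H, hH, hHX⟩

theorem Real.sInf_image_sInf_image_eq_of_isGLB {α β : Type*} {A : Set α} {B : Set β}
    (hA : A.Nonempty) (hB : B.Nonempty) {f : α → β → ℝ} (hf : ∀ a b, 0 ≤ f a b) {g : β → ℝ}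
    (hg : ∀ b ∈ B, IsGLB ((f · b) '' A) (g b)) :
    sInf ((fun a => sInf (f a '' B)) '' A) = sInf (g '' B) := by
  have hg0 : BddBelow (g '' B) :=
    ⟨0, by rintro _ ⟨b, hb, rfl⟩; exact (hg b hb).2 (by rintro _ ⟨a, -, rfl⟩; exact hf a b)⟩
  refine IsGLB.csInf_eq ⟨?_, fun m hm => ?_⟩ (hA.image _)
  · rintro _ ⟨a, ha, rfl⟩
    refine le_csInf (hB.image _) ?_
    rintro _ ⟨b, hb, rfl⟩
    exact (csInf_le hg0 ⟨b, hb, rfl⟩).trans ((hg b hb).1 ⟨a, ha, rfl⟩)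
  · refine le_csInf (hB.image _) ?_
    rintro _ ⟨b, hb, rfl⟩
    refine (hg b hb).2 ?_
    rintro _ ⟨a, ha, rfl⟩
    exact (hm ⟨a, ha, rfl⟩).trans
      (csInf_le ⟨0, by rintro _ ⟨b, -, rfl⟩; exact hf a b⟩ ⟨b, hb, rfl⟩)

theorem Real.sInf_image_const_mul_rpow {ι : Type*} {s : Set ι} {f : ι → ℝ} (hs : s.Nonempty)
    (hf : ∀ x ∈ s, 0 ≤ f x) {a p : ℝ} (ha : 0 ≤ a) (hp : 0 ≤ p) :
    sInf ((fun x => a * f x ^ p) '' s) = a * sInf (f '' s) ^ p := by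
  rw [← Set.image_image (fun t => a * t ^ p) f s]
  refine (MonotoneOn.map_csInf_of_continuousWithinAt ?_ ?_ (hs.image f) ?_).symm
  · exact ((Real.continuous_rpow_const hp).const_mul a).continuousWithinAt
  · rintro _ ⟨x, hx, rfl⟩ _ - hxy
    exact mul_le_mul_of_nonneg_left (Real.rpow_le_rpow (hf x hx) hxy hp) ha
  · exact ⟨0, by rintro _ ⟨x, hx, rfl⟩; exact hf x hx⟩

section Lattice

def latticeNonzero {n k m : ℕ} (B : Fin m → (Fin k → Matrix (Fin n) (Fin n) ℂ)) :
    Set (Fin k → Matrix (Fin n) (Fin n) ℂ) :=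
  (Submodule.span ℤ (Set.range B) : Set (Fin k → Matrix (Fin n) (Fin n) ℂ)) \ {0}

theorem detMin_eq_sInf {n k m : ℕ} (B : Fin m → (Fin k → Matrix (Fin n) (Fin n) ℂ)) :
    detMin B = sInf (pdetAbs '' latticeNonzero B) := by
  rw [detMin]
  congr 1
  ext r
  simp [latticeNonzero, eq_comm, and_assoc]

theorem detMin_nonneg {n k m : ℕ} (B : Fin m → (Fin k → Matrix (Fin n) (Fin n) ℂ)) :
    0 ≤ detMin B :=
  Real.sInf_nonneg (by rintro _ ⟨X, -, -, rfl⟩; exact pdetAbs_nonneg X)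

theorem detMin_eq_zero_of_pdetAbs_eq_zero {n k m : ℕ}
    (B : Fin m → (Fin k → Matrix (Fin n) (Fin n) ℂ)) {X : Fin k → Matrix (Fin n) (Fin n) ℂ}
    (hX : X ∈ latticeNonzero B) (hX0 : pdetAbs X = 0) : detMin B = 0 := by
  refine le_antisymm ?_ (detMin_nonneg B)
  rw [detMin_eq_sInf, ← hX0]
  exact csInf_le ⟨0, by rintro _ ⟨Y, -, rfl⟩; exact pdetAbs_nonneg Y⟩ ⟨X, hX, rfl⟩

variable {n k : ℕ} (B : Fin (2 * n ^ 2 * k) → (Fin k → Matrix (Fin n) (Fin n) ℂ))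

theorem reducedHermite_eq_inv_mul_sInf :
    reducedHermite B = (latticeVol B ^ ((1 : ℝ) / (n ^ 2 * k)))⁻¹ *
      sInf ((fun H => sInf ((fun X => frobSq (H * X)) ''
        latticeNonzero B)) '' prodDetOne n k) := by
  set c := latticeVol B ^ ((1 : ℝ) / (n ^ 2 * k))
  have hc : 0 ≤ c⁻¹ := inv_nonneg.mpr (Real.rpow_nonneg (Real.sqrt_nonneg _) _)
  have hinner (H : Fin k → Matrix (Fin n) (Fin n) ℂ) :
      sInf {y | ∃ X ∈ Submodule.span ℤ (Set.range B), X ≠ 0 ∧ y = frobSq (H * X) / c} =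
        c⁻¹ * sInf ((fun X => frobSq (H * X)) '' latticeNonzero B) := by
    rw [← smul_eq_mul (a := c⁻¹), ← Real.sInf_smul_of_nonneg hc, ← Set.image_smul,
      Set.image_image]
    congr 1
    ext y
    simp [latticeNonzero, div_eq_inv_mul, eq_comm, and_assoc]
  rw [← smul_eq_mul (a := c⁻¹), ← Real.sInf_smul_of_nonneg hc, ← Set.image_smul, Set.image_image]
  refine congrArg sInf (Set.ext fun r => ⟨?_, ?_⟩)
  · rintro ⟨H, hHu, hH1, rfl⟩
    exact ⟨H, ⟨hHu, hH1⟩, (hinner H).symm⟩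
  · rintro ⟨H, ⟨hHu, hH1⟩, rfl⟩
    exact ⟨H, hHu, hH1, (hinner H).symm⟩

theorem normMinDet_rpow (hn : 0 < n) (hk : 0 < k) :
    normMinDet B ^ ((2 : ℝ) / (n * k)) =
      detMin B ^ ((2 : ℝ) / (n * k)) / latticeVol B ^ ((1 : ℝ) / (n ^ 2 * k)) := by
  have hV : 0 ≤ latticeVol B := Real.sqrt_nonneg _
  rw [normMinDet, Real.div_rpow (detMin_nonneg B) (Real.rpow_nonneg hV _), ← Real.rpow_mul hV]
  congr 2
  field_simp

theorem reducedHermite_eq_mul_normMinDet_rpow (hn : 0 < n) (hk : 0 < k)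
    (hB : LinearIndependent ℝ B) :
    reducedHermite B = n * k * normMinDet B ^ ((2 : ℝ) / (n * k)) := by
  have hL : (latticeNonzero B).Nonempty :=
    ⟨B ⟨0, by positivity⟩, Submodule.subset_span ⟨_, rfl⟩, hB.ne_zero _⟩
  have hG : (prodDetOne n k).Nonempty := ⟨1, mem_prodDetOne_of_prod_det_eq_one (by simp)⟩
  rw [reducedHermite_eq_inv_mul_sInf, Real.sInf_image_sInf_image_eq_of_isGLB hG hL
      (fun _ _ => frobSq_nonneg _) (fun X _ => isGLB_frobSq_mul hn hk X),
    Real.sInf_image_const_mul_rpow hL (fun X _ => pdetAbs_nonneg X) (by positivity)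
      (by positivity), ← detMin_eq_sInf, normMinDet_rpow B hn hk]
  ring

end Lattice

/-- **Reduced Hermite invariant and normalized minimum determinant.** For a full-rank lattice
`L ⊂ M_{n×nk}(ℂ)` of rank `2n²k`: if `det_min(L) > 0` (nonvanishing determinant), then
`rh_G(L) = nk · δ(L)^{2/(nk)}`; moreover, if some nonzero `X ∈ L` has `∏ det (X i) = 0`, then
`rh_G(L) = 0 = nk · δ(L)^{2/(nk)}`. -/
theorem reducedHermite_eq_normMinDet (n k : ℕ) (hn : 0 < n) (hk : 0 < k)
    (B : Fin (2 * n ^ 2 * k) → (Fin k → Matrix (Fin n) (Fin n) ℂ))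
    (hB : LinearIndependent ℝ B) :
    (0 < detMin B →
      reducedHermite B = (n * k : ℝ) * (normMinDet B) ^ ((2 : ℝ) / (n * k))) ∧
    ((∃ X ∈ Submodule.span ℤ (Set.range B), X ≠ 0 ∧ pdetAbs X = 0) →
      reducedHermite B = 0 ∧
        (n * k : ℝ) * (normMinDet B) ^ ((2 : ℝ) / (n * k)) = 0) := by
  have key := reducedHermite_eq_mul_normMinDet_rpow B hn hk hB
  refine ⟨fun _ => key, ?_⟩
  rintro ⟨X, hXL, hX0, hX⟩
  have hzero : (n * k : ℝ) * normMinDet B ^ ((2 : ℝ) / (n * k)) = 0 := by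
    rw [normMinDet, detMin_eq_zero_of_pdetAbs_eq_zero B ⟨hXL, hX0⟩ hX, zero_div,
      Real.zero_rpow (by positivity), mul_zero]
  exact ⟨key.trans hzero, hzero⟩
end
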